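/- arXiv:1510.06559 — 2 statements merged into one kernel-verified Lean document; each statement's English description precedes it below -/
import Mathlib

section
/- Let (Σ,g) be the cylinder [0,1] × T¹ with metric g = f(x)(dx² + dy²), f smooth positive. Write the Dirichlet problem -Δ_g u = λ² u decomposed on Fourier modes e^{imy}. Then on each mode the restricted Dirichlet-to-Neumann map is the 2×2 matrix Λ^m_g(λ²) = [[-M(m²)/√f(0), -1/(√f(0) Δ(m²))], [-1/(√f(1) Δ(m²)), -N(m²)/√f(1)]], where Δ, M, N are the characteristic and Weyl–Titchmarsh functions of -v'' + q_λ v = -μ² v with q_λ = -λ² f and Dirichlet conditions v(0)=v(1)=0. -/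
open Set

lemma wron_const (q : ℝ → ℂ) (v v' w w' : ℝ → ℂ)
    (hv : ∀ x ∈ Icc (0:ℝ) 1, HasDerivAt v (v' x) x ∧ HasDerivAt v' (q x * v x) x)
    (hw : ∀ x ∈ Icc (0:ℝ) 1, HasDerivAt w (w' x) x ∧ HasDerivAt w' (q x * w x) x) :
    v 1 * w' 1 - v' 1 * w 1 = v 0 * w' 0 - v' 0 * w 0 := by
  set W : ℝ → ℂ := fun x => v x * w' x - v' x * w x with hW
  have hd : ∀ x ∈ Icc (0:ℝ) 1, HasDerivAt W 0 x := by
    intro x hx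
    have h1 := (hv x hx).1.mul (hw x hx).2
    have h2 := (hv x hx).2.mul (hw x hx).1
    have := h1.sub h2
    convert this using 1
    · rfl
    · rfl
    · ring
  have hcont : ContinuousOn W (Icc 0 1) :=
    fun x hx => ((hd x hx).continuousAt).continuousWithinAt
  have := constant_of_has_deriv_right_zero hcont
    (fun x hx => ((hd x (Ico_subset_Icc_self hx)).hasDerivWithinAt)) 1 (by norm_num)
  simpa [hW] using this


/-- On the cylinder `[0,1] × T¹` with metric `g = f(x)(dx²+dy²)`, the
Dirichlet-to-Neumann map restricted to the Fourier mode `e^{imy}` sends the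
Dirichlet data `(ψ⁰, ψ¹)` to `(-u'(0)/√f(0), u'(1)/√f(1))`, where `u` solves
`-u'' + m²u - λ²fu = 0`, `u(0)=ψ⁰`, `u(1)=ψ¹`; this map is given by the matrix
`[[-M(m²)/√f(0), -1/(√f(0)Δ(m²))], [-1/(√f(1)Δ(m²)), -N(m²)/√f(1)]]` where
`Δ, M, N` are the characteristic and Weyl–Titchmarsh functions of
`-v'' - λ²f v = -μ²v`, `v(0)=v(1)=0`, evaluated at `μ² = m²`. -/
theorem stmt_9
    (f : ℝ → ℝ) (hf : ContDiff ℝ (⊤ : ℕ∞) f) (hfpos : ∀ x ∈ Icc (0:ℝ) 1, 0 < f x)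
    (lam2 : ℝ) (m : ℤ)
    (c₀ s₀ c₁ s₁ c₀' s₀' c₁' s₁' u u' : ℝ → ℂ)
    (ψ0 ψ1 : ℂ)
    (hode : ∀ v v' : ℝ → ℂ,
      (v, v') ∈ ({(c₀, c₀'), (s₀, s₀'), (c₁, c₁'), (s₁, s₁'), (u, u')} :
        Set ((ℝ → ℂ) × (ℝ → ℂ))) →
      ∀ x ∈ Icc (0:ℝ) 1, HasDerivAt v (v' x) x ∧
        HasDerivAt v' ((((m : ℝ) ^ 2 - lam2 * f x : ℝ) : ℂ) * v x) x)
    (hic₀ : c₀ 0 = 1 ∧ c₀' 0 = 0 ∧ s₀ 0 = 0 ∧ s₀' 0 = 1)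
    (hic₁ : c₁ 1 = 1 ∧ c₁' 1 = 0 ∧ s₁ 1 = 0 ∧ s₁' 1 = 1)
    (hu0 : u 0 = ψ0) (hu1 : u 1 = ψ1)
    (Δ M N : ℂ)
    (hΔdef : Δ = s₀ 0 * s₁' 0 - s₀' 0 * s₁ 0)
    (hMdef : M = -(c₀ 0 * s₁' 0 - c₀' 0 * s₁ 0) / Δ)
    (hNdef : N = -(c₁ 0 * s₀' 0 - c₁' 0 * s₀ 0) / Δ)
    (hΔne : Δ ≠ 0) :
    -(u' 0) / (Real.sqrt (f 0) : ℂ) =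
      (-(M) / (Real.sqrt (f 0) : ℂ)) * ψ0 +
        (-(1 : ℂ) / ((Real.sqrt (f 0) : ℂ) * Δ)) * ψ1 ∧
    u' 1 / (Real.sqrt (f 1) : ℂ) =
      (-(1 : ℂ) / ((Real.sqrt (f 1) : ℂ) * Δ)) * ψ0 +
        (-(N) / (Real.sqrt (f 1) : ℂ)) * ψ1 := by

  set q : ℝ → ℂ := fun x => (((m : ℝ) ^ 2 - lam2 * f x : ℝ) : ℂ) with hq
  obtain ⟨hc00, hc0'0, hs00, hs0'0⟩ := hic₀
  obtain ⟨hc11, hc1'1, hs11, hs1'1⟩ := hic₁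
  have hU := hode u u' (by simp)
  have hS0 := hode s₀ s₀' (by simp)
  have hS1 := hode s₁ s₁' (by simp)
  have hC1 := hode c₁ c₁' (by simp)
  have h1 := wron_const q u u' s₁ s₁' hU hS1
  have h2 := wron_const q u u' s₀ s₀' hU hS0
  have h3 := wron_const q s₀ s₀' s₁ s₁' hS0 hS1
  have h4 := wron_const q c₁ c₁' s₀ s₀' hC1 hS0
  rw [hu0, hu1, hs11, hs1'1] at h1
  rw [hu0, hu1, hs00, hs0'0] at h2
  rw [hs11, hs1'1, hs00, hs0'0] at h3
  rw [hc11, hc1'1, hs00, hs0'0] at h4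
  have hf0 : (Real.sqrt (f 0) : ℂ) ≠ 0 := by
    have : 0 < Real.sqrt (f 0) :=
      Real.sqrt_pos.mpr (hfpos 0 ⟨le_refl 0, zero_le_one⟩)
    exact_mod_cast this.ne'
  have hf1 : (Real.sqrt (f 1) : ℂ) ≠ 0 := by
    have : 0 < Real.sqrt (f 1) :=
      Real.sqrt_pos.mpr (hfpos 1 ⟨zero_le_one, le_refl 1⟩)
    exact_mod_cast this.ne'
  rw [hs00, hs0'0] at hΔdef hNdef
  rw [hc00, hc0'0] at hMdef
  have hu'0 : u' 0 = (ψ1 - ψ0 * s₁' 0) / Δ := by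
    rw [eq_div_iff hΔne]; linear_combination -h1 + u' 0 * hΔdef
  have hu'1 : u' 1 = (c₁ 0 * ψ1 - ψ0) / Δ := by
    rw [eq_div_iff hΔne]; linear_combination -h2 - u' 1 * h3 + u' 1 * hΔdef + ψ1 * h4
  constructor
  · rw [hu'0, hMdef]; field_simp; ring
  · rw [hu'1, hNdef]; field_simp; ring
end

section
/- Let f, h, f̃, h̃ be smooth positive functions on [0,1] and set q_{λn} = [(log h)']²/16 + (log h)''/4 + n² f/h - λ² f and similarly q̃_{λn} with f̃, h̃. If q_{λn} = q̃_{λn} on [0,1] for at least two distinct values of n² (n ∈ ℤ), then f̃ = c⁴ f and h̃ = c⁴ h, where c = (h̃/h)^{1/4} is a smooth positive function satisfying the ODE c'' + (1/2)(log h)' c' + λ² f (c - c⁵) = 0 on [0,1]. -/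
open Set

/-- If the potentials `q_{λn} = ((log h)')²/16 + (log h)''/4 + n²f/h - λ²f` and
`q̃_{λn}` (built from `f̃, h̃`) coincide on `[0,1]` for two distinct values of
`n²`, then `f̃ = c⁴f` and `h̃ = c⁴h` where `c = (h̃/h)^{1/4}` is a smooth
positive solution of `c'' + ½(log h)'c' + λ²f(c - c⁵) = 0` on `[0,1]`. -/
theorem stmt_15
    (f h ft ht : ℝ → ℝ)
    (hf : ContDiff ℝ (⊤ : ℕ∞) f) (hh : ContDiff ℝ (⊤ : ℕ∞) h)
    (hft : ContDiff ℝ (⊤ : ℕ∞) ft) (hht : ContDiff ℝ (⊤ : ℕ∞) ht)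
    (hfpos : ∀ x ∈ Icc (0:ℝ) 1, 0 < f x) (hhpos : ∀ x ∈ Icc (0:ℝ) 1, 0 < h x)
    (hftpos : ∀ x ∈ Icc (0:ℝ) 1, 0 < ft x) (hhtpos : ∀ x ∈ Icc (0:ℝ) 1, 0 < ht x)
    (lam2 : ℝ) (n₁ n₂ : ℤ) (hne : (n₁ : ℝ) ^ 2 ≠ (n₂ : ℝ) ^ 2)
    (heq : ∀ n : ℤ, n = n₁ ∨ n = n₂ → ∀ x ∈ Icc (0:ℝ) 1,
      (deriv (fun y : ℝ => Real.log (h y)) x) ^ 2 / 16 +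
        deriv (deriv (fun y : ℝ => Real.log (h y))) x / 4 +
        (n : ℝ) ^ 2 * (f x / h x) - lam2 * f x =
      (deriv (fun y : ℝ => Real.log (ht y)) x) ^ 2 / 16 +
        deriv (deriv (fun y : ℝ => Real.log (ht y))) x / 4 +
        (n : ℝ) ^ 2 * (ft x / ht x) - lam2 * ft x) :
    ∀ x ∈ Icc (0:ℝ) 1,
      0 < (ht x / h x) ^ ((1:ℝ) / 4) ∧
      ft x = ((ht x / h x) ^ ((1:ℝ) / 4)) ^ 4 * f x ∧
      ht x = ((ht x / h x) ^ ((1:ℝ) / 4)) ^ 4 * h x ∧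
      deriv (deriv (fun y : ℝ => (ht y / h y) ^ ((1:ℝ) / 4))) x +
        (1 / 2) * deriv (fun y : ℝ => Real.log (h y)) x *
          deriv (fun y : ℝ => (ht y / h y) ^ ((1:ℝ) / 4)) x +
        lam2 * f x * ((ht x / h x) ^ ((1:ℝ) / 4) -
          ((ht x / h x) ^ ((1:ℝ) / 4)) ^ 5) = 0 := by
  intro x hx
  have hhx := hhpos x hx
  have hhtx := hhtpos x hx
  set U : Set ℝ := {y | 0 < h y} ∩ {y | 0 < ht y} with hUdef
  have hUopen : IsOpen U :=
    (isOpen_lt continuous_const (hh.continuous)).inter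
      (isOpen_lt continuous_const (hht.continuous))
  have hxU : x ∈ U := ⟨hhx, hhtx⟩
  have hUnhds : U ∈ nhds x := hUopen.mem_nhds hxU
  -- step 1 : f/h = ft/ht at x, and the λ-part identity HQ
  have E1 := heq n₁ (Or.inl rfl) x hx
  have E2 := heq n₂ (Or.inr rfl) x hx
  have key : ((n₁:ℝ)^2 - (n₂:ℝ)^2) * (f x / h x - ft x / ht x) = 0 := by
    linear_combination E1 - E2
  have hdiv : f x / h x = ft x / ht x := by
    rcases mul_eq_zero.mp key with h1 | h2
    · exact absurd (sub_eq_zero.mp h1) hne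
    · exact sub_eq_zero.mp h2
  have HQ : (deriv (fun y : ℝ => Real.log (h y)) x) ^ 2 / 16 +
      deriv (deriv (fun y : ℝ => Real.log (h y))) x / 4 - lam2 * f x =
      (deriv (fun y : ℝ => Real.log (ht y)) x) ^ 2 / 16 +
      deriv (deriv (fun y : ℝ => Real.log (ht y))) x / 4 - lam2 * ft x := by
    linear_combination E1 - (n₁:ℝ)^2 * hdiv
  -- c and algebraic facts
  set c : ℝ → ℝ := fun y : ℝ => (ht y / h y) ^ ((1:ℝ) / 4) with hcdef
  have hcx : 0 < c x := Real.rpow_pos_of_pos (div_pos hhtx hhx) _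
  have hc4 : c x ^ 4 = ht x / h x := by
    simp only [hcdef]
    rw [← Real.rpow_natCast ((ht x / h x) ^ ((1:ℝ)/4)) 4,
      ← Real.rpow_mul (le_of_lt (div_pos hhtx hhx))]
    norm_num
  have hft_eq : ft x = c x ^ 4 * f x := by
    have h1 : ft x = (f x / h x) * ht x := by
      rw [hdiv, div_mul_cancel₀ _ (ne_of_gt hhtx)]
    rw [h1, hc4]; ring
  have hht_eq : ht x = c x ^ 4 * h x := by
    rw [hc4]; field_simp
  refine ⟨hcx, hft_eq, hht_eq, ?_⟩
  -- derivative machinery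
  set Lh : ℝ → ℝ := fun y : ℝ => Real.log (h y) with hLhdef
  set Lt : ℝ → ℝ := fun y : ℝ => Real.log (ht y) with hLtdef
  have hLh : ∀ y ∈ U, HasDerivAt Lh (deriv h y / h y) y := by
    intro y hy
    have : HasDerivAt (fun z => Real.log (h z)) ((h y)⁻¹ * deriv h y) y := (Real.hasDerivAt_log (ne_of_gt hy.1)).comp y
      ((hh.differentiable (by simp)) y).hasDerivAt
    simpa [hLhdef, Function.comp, div_eq_inv_mul] using this
  have hLt : ∀ y ∈ U, HasDerivAt Lt (deriv ht y / ht y) y := by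
    intro y hy
    have : HasDerivAt (fun z => Real.log (ht z)) ((ht y)⁻¹ * deriv ht y) y := (Real.hasDerivAt_log (ne_of_gt hy.2)).comp y
      ((hht.differentiable (by simp)) y).hasDerivAt
    simpa [hLtdef, Function.comp, div_eq_inv_mul] using this
  have hdLh_diff : DifferentiableAt ℝ (deriv Lh) x := by
    have hev : deriv Lh =ᶠ[nhds x] fun y => deriv h y / h y :=
      Filter.eventuallyEq_of_mem hUnhds (fun y hy => (hLh y hy).deriv)
    have hd : DifferentiableAt ℝ (fun y => deriv h y / h y) x :=
      ((contDiff_infty_iff_deriv.mp (hh.of_le (by simp))).2.differentiable (by simp) x).div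
        ((hh.differentiable (by simp)) x) (ne_of_gt hhx)
    exact (hev.differentiableAt_iff).mpr hd
  have hdLt_diff : DifferentiableAt ℝ (deriv Lt) x := by
    have hev : deriv Lt =ᶠ[nhds x] fun y => deriv ht y / ht y :=
      Filter.eventuallyEq_of_mem hUnhds (fun y hy => (hLt y hy).deriv)
    have hd : DifferentiableAt ℝ (fun y => deriv ht y / ht y) x :=
      ((contDiff_infty_iff_deriv.mp (hht.of_le (by simp))).2.differentiable (by simp) x).div
        ((hht.differentiable (by simp)) x) (ne_of_gt hhtx)
    exact (hev.differentiableAt_iff).mpr hd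
  have HA2 : HasDerivAt (deriv Lh) (deriv (deriv Lh) x) x := hdLh_diff.hasDerivAt
  have HB2 : HasDerivAt (deriv Lt) (deriv (deriv Lt) x) x := hdLt_diff.hasDerivAt
  -- c = exp((1/4)(Lt - Lh)) on U
  have hcg : ∀ y ∈ U, c y = Real.exp ((1/4) * (Lt y - Lh y)) := by
    intro y hy
    simp only [hcdef]
    rw [Real.rpow_def_of_pos (div_pos hy.2 hy.1),
      Real.log_div (ne_of_gt hy.2) (ne_of_gt hy.1)]
    congr 1
    ring
  set ψ : ℝ → ℝ := fun y => (1/4) * (deriv Lt y - deriv Lh y) with hψdef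
  have hcU : ∀ y ∈ U, HasDerivAt c (c y * ψ y) y := by
    intro y hy
    have hφ : HasDerivAt (fun z => (1/4) * (Lt z - Lh z)) (ψ y) y := by
      have h0 := (((hLt y hy).sub (hLh y hy)).const_mul (1/4:ℝ))
      have hval : ψ y = (1/4) * (deriv ht y / ht y - deriv h y / h y) := by
        simp only [hψdef, (hLt y hy).deriv, (hLh y hy).deriv]
      rw [hval]
      exact h0
    have hev : c =ᶠ[nhds y] fun z => Real.exp ((1/4) * (Lt z - Lh z)) :=
      Filter.eventuallyEq_of_mem (hUopen.mem_nhds hy) hcg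
    have hexp' : HasDerivAt (fun z => Real.exp ((1/4) * (Lt z - Lh z))) (c y * ψ y) y := by
      have hexp : HasDerivAt (Real.exp ∘ fun z => (1/4) * (Lt z - Lh z)) (Real.exp ((1/4) * (Lt y - Lh y)) * ψ y) y := (Real.hasDerivAt_exp ((1/4) * (Lt y - Lh y))).comp y hφ
      have h2 : (fun z => Real.exp ((1/4) * (Lt z - Lh z))) =
          Real.exp ∘ fun z => (1/4) * (Lt z - Lh z) := rfl
      rw [h2]
      convert hexp using 1
      rw [hcg y hy]
    exact hexp'.congr_of_eventuallyEq hev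
  have hψx : HasDerivAt ψ
      ((1/4) * (deriv (deriv Lt) x - deriv (deriv Lh) x)) x :=
    (HB2.sub HA2).const_mul (1/4)
  have hG : HasDerivAt (fun y => c y * ψ y)
      (c x * ψ x * ψ x + c x * ((1/4) * (deriv (deriv Lt) x - deriv (deriv Lh) x))) x :=
    (hcU x hxU).mul hψx
  have hdc : deriv c x = c x * ψ x := (hcU x hxU).deriv
  have hdc2 : deriv (deriv c) x =
      c x * ψ x * ψ x + c x * ((1/4) * (deriv (deriv Lt) x - deriv (deriv Lh) x)) := by
    have hev : deriv c =ᶠ[nhds x] fun y => c y * ψ y :=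
      Filter.eventuallyEq_of_mem hUnhds (fun y hy => (hcU y hy).deriv)
    rw [hev.deriv_eq, hG.deriv]
  rw [hdc2, hdc]
  rw [hft_eq] at HQ
  simp only [hψdef]
  linear_combination (-(c x)) * HQ
end
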